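/- arXiv:0906.1912 — 3 statements merged into one kernel-verified Lean document; each statement's English description precedes it below -/
import Mathlib

section
/- Let ψ, ζ, ν ∈ Ψ(a,b) with ν(p) = ψ(p)·ζ(p), and suppose |T_λ f|_{q(p)} ≤ λ^{d/p - d}·|f|_p for all p ∈ (a,b), where q(p) = p/(p-1). Define ν*(q) = ν(q/(q-1)) and the fundamental function φ(G(ζ), δ) = sup_{p∈(a,b)} δ^{1/p}/ζ(p). Then λ^d·‖T_λ f‖_{G(ν*)} ≤ φ(G(ζ), λ^d)·‖f‖_{G(ψ)}. -/
/-!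
For each exponent `p`, multiplying the hypothesis `|T f|_{p'} ≤ λ^{d/p - d} |f|_p` by `λ^d`
leaves the factor `λ^{d/p} = (λ^d)^{1/p}`; dividing by `ν(p) = ψ(p) ζ(p)` splits the right-hand
side as `((λ^d)^{1/p} / ζ(p)) · (|f|_p / ψ(p))`, and both factors are bounded by their suprema
over `p`.
-/

open MeasureTheory Real Set ENNReal

lemma bddAbove_range_rpow_one_div_div {s : Set ℝ} (hs : ∀ p ∈ s, 1 ≤ p) {δ : ℝ}
    (hδ : 1 ≤ δ) {ζ : ℝ → ℝ} (hζ : ∀ p ∈ s, 0 < ζ p) (hζinf : 0 < sInf (ζ '' s)) :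
    BddAbove (range fun p : s => δ ^ (1 / (p : ℝ)) / ζ p) := by
  refine ⟨δ / sInf (ζ '' s), ?_⟩
  rintro _ ⟨⟨p, hp⟩, rfl⟩
  have hζp : sInf (ζ '' s) ≤ ζ p :=
    csInf_le ⟨0, by rintro _ ⟨q, hq, rfl⟩; exact (hζ q hq).le⟩ (mem_image_of_mem ζ hp)
  have hδp : δ ^ (1 / p) ≤ δ :=
    rpow_le_self_of_one_le hδ ((div_le_one (by linarith [hs p hp])).2 (hs p hp))
  exact div_le_div₀ (by linarith) hδp hζinf hζp

lemma ENNReal.ofReal_mul_div_le_of_le {x y : ℝ≥0∞} {c k u v : ℝ} (hc : 0 ≤ c) (hu : 0 < u)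
    (hv : 0 < v) (h : x ≤ ENNReal.ofReal k * y) :
    ENNReal.ofReal c * (x / ENNReal.ofReal (u * v)) ≤
      ENNReal.ofReal (c * k / v) * (y / ENNReal.ofReal u) := by
  calc ENNReal.ofReal c * (x / ENNReal.ofReal (u * v))
      ≤ ENNReal.ofReal c * (ENNReal.ofReal k * y / ENNReal.ofReal (u * v)) := by gcongr
    _ = ENNReal.ofReal (c * k / v) * (y / ENNReal.ofReal u) := by
      rw [ENNReal.ofReal_div_of_pos hv, ENNReal.ofReal_mul hc, ENNReal.ofReal_mul hu.le]
      simp only [div_eq_mul_inv]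
      rw [ENNReal.mul_inv (.inl (ENNReal.ofReal_pos.2 hu).ne') (.inl ENNReal.ofReal_ne_top)]
      ring

lemma ENNReal.mul_biSup_le_ofReal_ciSup_mul_biSup {ι : Type*} {s : Set ι} {c : ℝ≥0∞}
    {F G : ι → ℝ≥0∞} {A : ι → ℝ} (hA : BddAbove (range fun p : s => A p))
    (h : ∀ p ∈ s, c * F p ≤ ENNReal.ofReal (A p) * G p) :
    c * ⨆ p ∈ s, F p ≤ ENNReal.ofReal (⨆ p : s, A p) * ⨆ p ∈ s, G p := by
  rw [ENNReal.mul_iSup]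
  refine iSup_le fun p => ?_
  rw [ENNReal.mul_iSup]
  refine iSup_le fun hp => (h p hp).trans ?_
  exact mul_le_mul' (ENNReal.ofReal_le_ofReal (le_ciSup hA ⟨p, hp⟩))
    (le_iSup₂ (f := fun q _ => G q) p hp)

theorem stmt10_general (d : ℕ) (a b : ℝ) (ha : 1 ≤ a)
    (lam : ℝ) (hlam : 1 ≤ lam)
    (T : ((Fin d → ℝ) → ℝ) → ((Fin d → ℝ) → ℝ))
    (ψ ζ ν : ℝ → ℝ)
    (hψpos : ∀ p ∈ Set.Ioo a b, 0 < ψ p) (hζpos : ∀ p ∈ Set.Ioo a b, 0 < ζ p)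
    (hζinf : 0 < sInf (ζ '' Set.Ioo a b))
    (hν : ∀ p ∈ Set.Ioo a b, ν p = ψ p * ζ p)
    (f : (Fin d → ℝ) → ℝ)
    (hStein : ∀ p ∈ Set.Ioo a b,
      eLpNorm (T f) (ENNReal.ofReal (p / (p - 1))) volume ≤
        ENNReal.ofReal (lam ^ ((d : ℝ) / p - d)) *
          eLpNorm f (ENNReal.ofReal p) volume) :
    ENNReal.ofReal (lam ^ (d : ℝ)) *
        (⨆ p ∈ Set.Ioo a b,
          eLpNorm (T f) (ENNReal.ofReal (p / (p - 1))) volume /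
            ENNReal.ofReal (ν p)) ≤
      ENNReal.ofReal (⨆ p : Set.Ioo a b, (lam ^ (d : ℝ)) ^ (1 / p.1) / ζ p.1) *
        ⨆ p ∈ Set.Ioo a b,
          eLpNorm f (ENNReal.ofReal p) volume / ENNReal.ofReal (ψ p) := by
  have hlam0 : 0 < lam := by linarith
  refine ENNReal.mul_biSup_le_ofReal_ciSup_mul_biSup
    (A := fun p => (lam ^ (d : ℝ)) ^ (1 / p) / ζ p)
    (bddAbove_range_rpow_one_div_div (fun p hp => ha.trans hp.1.le)
      (one_le_rpow hlam d.cast_nonneg) hζpos hζinf) fun p hp => ?_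
  have hexp : lam ^ (d : ℝ) * lam ^ ((d : ℝ) / p - d) = (lam ^ (d : ℝ)) ^ (1 / p) := by
    rw [← rpow_add hlam0, ← rpow_mul hlam0.le]
    ring_nf
  rw [hν p hp, ← hexp]
  exact ENNReal.ofReal_mul_div_le_of_le (by positivity) (hψpos p hp) (hζpos p hp) (hStein p hp)

/-- Theorem 2 of the paper.  If `ν = ψ · ζ` on `(a,b)` and
`|T_λ f|_{q(p)} ≤ λ^{d/p - d} |f|_p` for all `p ∈ (a,b)` (with `q(p) = p/(p-1)`),
then `λ^d ‖T_λ f‖_{G(ν*)} ≤ φ(G(ζ), λ^d) ‖f‖_{G(ψ)}`, where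
`ν*(q) = ν(q/(q-1))` (so `ν*(q(p)) = ν(p)`) and
`φ(G(ζ), δ) = sup_{p ∈ (a,b)} δ^{1/p}/ζ(p)` is the fundamental function. -/
theorem stmt10 (d : ℕ) (a b : ℝ) (ha : 1 ≤ a) (hab : a < b) (hb : b ≤ 2)
    (lam : ℝ) (hlam : 1 ≤ lam)
    (T : ((Fin d → ℝ) → ℝ) → ((Fin d → ℝ) → ℝ))
    (ψ ζ ν : ℝ → ℝ)
    (hψpos : ∀ p ∈ Set.Ioo a b, 0 < ψ p) (hζpos : ∀ p ∈ Set.Ioo a b, 0 < ζ p)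
    (hψinf : 0 < sInf (ψ '' Set.Ioo a b)) (hζinf : 0 < sInf (ζ '' Set.Ioo a b))
    (hν : ∀ p ∈ Set.Ioo a b, ν p = ψ p * ζ p)
    (f : (Fin d → ℝ) → ℝ)
    (hStein : ∀ p ∈ Set.Ioo a b,
      eLpNorm (T f) (ENNReal.ofReal (p / (p - 1))) volume ≤
        ENNReal.ofReal (lam ^ ((d : ℝ) / p - d)) *
          eLpNorm f (ENNReal.ofReal p) volume) :
    ENNReal.ofReal (lam ^ (d : ℝ)) *
        (⨆ p ∈ Set.Ioo a b,
          eLpNorm (T f) (ENNReal.ofReal (p / (p - 1))) volume /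
            ENNReal.ofReal (ν p)) ≤
      ENNReal.ofReal (⨆ p : Set.Ioo a b, (lam ^ (d : ℝ)) ^ (1 / p.1) / ζ p.1) *
        ⨆ p ∈ Set.Ioo a b,
          eLpNorm f (ENNReal.ofReal p) volume / ENNReal.ofReal (ψ p) :=
  stmt10_general d a b ha lam hlam T ψ ζ ν hψpos hζpos hζinf hν f hStein
end

section
/- There exists a constant C > 0 such that for all λ ≥ 1 and all r > 2, the function u(x) = ∫_{-1}^1 cos(λxy)|y|^{-1/2} dy satisfies |u|_r ≥ C·λ^{-1/r}·(r-2)^{-1/r}. -/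
/-!
Writing `c = λx`, evenness in `y` and the substitution `t = c y` give `u = 2 c^(-1/2) F(c)` with
`F(L) = ∫₀^L cos t · t^(-1/2) dt`. Integrating by parts against the decreasing weight `t^(-1/2)`
shows `|F(b) - F(a)| ≤ 2 a^(-1/2)`; together with `cos t ≥ 1 - 2t/π` on `[0, π/2]`, which gives
`F(π/2) ≥ (4/3)√(π/2)`, this keeps `F ≥ 1/20` on `[1, ∞)` because `4/3 > 4/π`. Hence
`|u| ≥ c^(-1/2)/10` for `c ≥ 1`, and integrating `c^(-r/2)` over `c ≥ 1` after rescaling `x` by `λ`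
produces the factor `λ⁻¹ (r - 2)⁻¹`. The same estimates give `|u| ≤ 12 (1 + |c|)^(-1/2)`, so `|u|^r`
is integrable for `r > 2` and the Bochner integral is the genuine `L^r` norm.
-/

open MeasureTheory Real Set intervalIntegral

theorem abs_integral_cos_mul_le_of_deriv_nonpos {w w' : ℝ → ℝ} {a b : ℝ} (hab : a ≤ b)
    (hw : ∀ x ∈ uIcc a b, HasDerivAt w (w' x) x) (hw'_nonpos : ∀ x ∈ Ioc a b, w' x ≤ 0)
    (hw' : IntervalIntegrable w' volume a b) (hwb : 0 ≤ w b) :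
    |∫ x in a..b, cos x * w x| ≤ 2 * w a := by
  have hibp : ∫ x in a..b, cos x * w x = w b * sin b - w a * sin a - ∫ x in a..b, w' x * sin x := by
    simp_rw [mul_comm (cos _)]
    exact intervalIntegral.integral_mul_deriv_eq_deriv_mul hw (fun x _ => hasDerivAt_sin x) hw'
      (continuous_cos.intervalIntegrable _ _)
  have hftc : ∫ x in a..b, w' x = w b - w a := integral_eq_sub_of_hasDerivAt hw hw'
  have hrem : |∫ x in a..b, w' x * sin x| ≤ w a - w b := by
    rw [← Real.norm_eq_abs, ← neg_sub, ← hftc, ← intervalIntegral.integral_neg]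
    refine norm_integral_le_of_norm_le hab (ae_of_all _ fun x hx => ?_) hw'.neg
    rw [norm_mul, Real.norm_eq_abs, abs_of_nonpos (hw'_nonpos x hx)]
    exact mul_le_of_le_one_right (by linarith [hw'_nonpos x hx]) (abs_sin_le_one x)
  have hwa : 0 ≤ w a := by linarith [abs_nonneg (∫ x in a..b, w' x * sin x)]
  rw [hibp]
  calc _ ≤ |w b * sin b| + |w a * sin a| + |∫ x in a..b, w' x * sin x| :=
      (abs_sub _ _).trans (add_le_add_left (abs_sub _ _) _)
    _ ≤ w b + w a + (w a - w b) := by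
      gcongr
      · rw [abs_mul, abs_of_nonneg hwb]; exact mul_le_of_le_one_right hwb (abs_sin_le_one b)
      · rw [abs_mul, abs_of_nonneg hwa]; exact mul_le_of_le_one_right hwa (abs_sin_le_one a)
    _ = 2 * w a := by ring

theorem integral_neg_eq_two_smul_of_even {E : Type*} [NormedAddCommGroup E] [NormedSpace ℝ E]
    {f : ℝ → E} {a : ℝ} (hf : ∀ x, f (-x) = f x) (hi : IntervalIntegrable f volume 0 a) :
    ∫ x in -a..a, f x = (2 : ℝ) • ∫ x in 0..a, f x := by
  have hi' : IntervalIntegrable f volume (-a) 0 := by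
    rw [IntervalIntegrable.iff_comp_neg]
    simpa [hf] using hi.symm
  have hneg : ∫ x in -a..0, f x = ∫ x in 0..a, f x := by
    simpa [hf] using (integral_comp_neg (a := 0) (b := a) f).symm
  rw [← integral_add_adjacent_intervals hi' hi, hneg, two_smul]

lemma rpow_neg_half_eq_inv_sqrt {x : ℝ} (hx : 0 ≤ x) : x ^ (-(1/2) : ℝ) = (√x)⁻¹ := by
  rw [rpow_neg hx, ← sqrt_eq_rpow]

lemma intervalIntegrable_cos_mul_rpow_neg_half (a b : ℝ) :
    IntervalIntegrable (fun t => cos t * t ^ (-(1/2) : ℝ)) volume a b :=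
  (intervalIntegrable_rpow' (by norm_num)).continuousOn_mul continuous_cos.continuousOn

lemma integral_rpow_neg_half (L : ℝ) :
    ∫ t in (0 : ℝ)..L, t ^ (-(1/2) : ℝ) = 2 * √L := by
  rw [integral_rpow (Or.inl (by norm_num)), sqrt_eq_rpow]
  norm_num
  ring

-- `F(L) = 2 ∫₀^√L cos(s²) ds`: the Fresnel cosine integral, up to normalisation.
noncomputable def fresnelCos (L : ℝ) : ℝ := ∫ t in (0 : ℝ)..L, cos t * t ^ (-(1/2) : ℝ)

lemma abs_fresnelCos_sub_le {a b : ℝ} (ha : 0 < a) (hab : a ≤ b) :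
    |fresnelCos b - fresnelCos a| ≤ 2 * a ^ (-(1/2) : ℝ) := by
  rw [fresnelCos, fresnelCos, integral_interval_sub_left
    (intervalIntegrable_cos_mul_rpow_neg_half _ _) (intervalIntegrable_cos_mul_rpow_neg_half _ _)]
  have hpos : ∀ x ∈ uIcc a b, 0 < x := fun x hx => ha.trans_le (uIcc_of_le hab ▸ hx).1
  refine abs_integral_cos_mul_le_of_deriv_nonpos hab
    (fun x hx => hasDerivAt_rpow_const (Or.inl (hpos x hx).ne')) (fun x hx => ?_)
    (ContinuousOn.intervalIntegrable ?_) (rpow_nonneg (ha.le.trans hab) _)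
  · exact mul_nonpos_of_nonpos_of_nonneg (by norm_num) (rpow_nonneg (ha.trans hx.1).le _)
  · exact continuousOn_const.mul
      (continuousOn_id.rpow_const fun x hx => Or.inl (hpos x hx).ne')

lemma four_thirds_mul_sqrt_le_fresnelCos {L : ℝ} (hL₀ : 0 ≤ L) (hL : L ≤ π / 2) :
    4 / 3 * √L ≤ fresnelCos L := by
  have hmono : ∫ t in (0 : ℝ)..L, (t ^ (-(1/2) : ℝ) - 2 / π * t ^ (1/2 : ℝ)) ≤ fresnelCos L := by
    refine integral_mono_on_of_le_Ioo hL₀ ?_ (intervalIntegrable_cos_mul_rpow_neg_half _ _)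
      fun t ht => ?_
    · exact (intervalIntegrable_rpow' (by norm_num)).sub
        ((intervalIntegrable_rpow' (by norm_num)).const_mul _)
    have h : t ^ (1/2 : ℝ) = t * t ^ (-(1/2) : ℝ) := by
      rw [← rpow_one_add' ht.1.le (by norm_num)]; norm_num
    rw [h]
    nlinarith [one_sub_mul_le_cos ht.1.le (ht.2.le.trans hL), rpow_nonneg ht.1.le (-(1/2) : ℝ)]
  have hval : ∫ t in (0 : ℝ)..L, (t ^ (-(1/2) : ℝ) - 2 / π * t ^ (1/2 : ℝ))
      = 2 * √L - 4 / (3 * π) * L * √L := by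
    rw [integral_sub (intervalIntegrable_rpow' (by norm_num))
      ((intervalIntegrable_rpow' (by norm_num)).const_mul _), intervalIntegral.integral_const_mul,
      integral_rpow_neg_half L, integral_rpow (Or.inl (by norm_num)),
      show (1/2 : ℝ) + 1 = 1 + 1/2 by norm_num, rpow_one_add' hL₀ (by norm_num),
      ← sqrt_eq_rpow]
    norm_num
    ring
  have hsq := sqrt_nonneg L
  have hπ := pi_pos
  have : 4 / (3 * π) * L * √L ≤ 2 / 3 * √L := by
    rw [div_mul_eq_mul_div, div_mul_eq_mul_div, div_le_iff₀ (by positivity)]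
    nlinarith [mul_le_mul_of_nonneg_right hL hsq]
  linarith

lemma one_twentieth_le_fresnelCos {L : ℝ} (hL : 1 ≤ L) : 1 / 20 ≤ fresnelCos L := by
  rcases le_or_gt L (π / 2) with hLπ | hLπ
  · have := four_thirds_mul_sqrt_le_fresnelCos (by linarith) hLπ
    linarith [one_le_sqrt.mpr hL]
  -- beyond `π/2` the oscillation costs at most `2 (π/2)^(-1/2)`, less than `F(π/2) ≥ (4/3)√(π/2)`
  have hhead := four_thirds_mul_sqrt_le_fresnelCos (by positivity) le_rfl
  have htail := (abs_le.mp (abs_fresnelCos_sub_le (by positivity) hLπ.le)).1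
  rw [rpow_neg_half_eq_inv_sqrt (by positivity)] at htail
  set s := √(π / 2)
  have hs2 : s ^ 2 = π / 2 := sq_sqrt (by positivity)
  have hs0 : 0 < s := sqrt_pos.mpr (by positivity)
  have hsinv : s * s⁻¹ = 1 := mul_inv_cancel₀ hs0.ne'
  have := pi_gt_d2
  have := pi_lt_d2
  nlinarith [inv_pos.mpr hs0]

lemma norm_cos_mul_rpow_neg_half_le (c : ℝ) {y : ℝ} (hy : 0 ≤ y) :
    ‖cos (c * y) * y ^ (-(1/2) : ℝ)‖ ≤ y ^ (-(1/2) : ℝ) := by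
  rw [norm_mul, Real.norm_eq_abs, Real.norm_eq_abs, abs_of_nonneg (rpow_nonneg hy _)]
  exact mul_le_of_le_one_left (rpow_nonneg hy _) (abs_cos_le_one _)

lemma abs_integral_cos_mul_rpow_le_two (c : ℝ) :
    |∫ y in (0 : ℝ)..1, cos (c * y) * y ^ (-(1/2) : ℝ)| ≤ 2 := by
  rw [← Real.norm_eq_abs]
  calc _ ≤ ∫ y in (0 : ℝ)..1, y ^ (-(1/2) : ℝ) :=
        norm_integral_le_of_norm_le zero_le_one
          (ae_of_all _ fun y hy => norm_cos_mul_rpow_neg_half_le c hy.1.le)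
          (intervalIntegrable_rpow' (by norm_num))
    _ = 2 := by rw [integral_rpow_neg_half, sqrt_one, mul_one]

lemma abs_fresnelCos_le_four {L : ℝ} (hL : 1 ≤ L) : |fresnelCos L| ≤ 4 := by
  have h1 : |fresnelCos 1| ≤ 2 := by
    simpa [fresnelCos] using abs_integral_cos_mul_rpow_le_two 1
  have h2 := abs_fresnelCos_sub_le zero_lt_one hL
  rw [one_rpow] at h2
  calc |fresnelCos L| = |(fresnelCos L - fresnelCos 1) + fresnelCos 1| := by rw [sub_add_cancel]
    _ ≤ 4 := by linarith [abs_add_le (fresnelCos L - fresnelCos 1) (fresnelCos 1)]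

noncomputable def oscTransform (c : ℝ) : ℝ := ∫ y in (-1 : ℝ)..1, cos (c * y) * |y| ^ (-(1/2) : ℝ)

lemma oscTransform_eq_two_mul (c : ℝ) :
    oscTransform c = 2 * ∫ y in (0 : ℝ)..1, cos (c * y) * y ^ (-(1/2) : ℝ) := by
  have hcongr : EqOn (fun y => cos (c * y) * |y| ^ (-(1/2) : ℝ))
      (fun y => cos (c * y) * y ^ (-(1/2) : ℝ)) (uIcc 0 1) := fun y hy => by
    simp only [abs_of_nonneg (uIcc_of_le (zero_le_one (α := ℝ)) ▸ hy).1]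
  have hi : IntervalIntegrable (fun y => cos (c * y) * y ^ (-(1/2) : ℝ)) volume 0 1 :=
    (intervalIntegrable_rpow' (by norm_num)).continuousOn_mul (by fun_prop)
  rw [oscTransform, integral_neg_eq_two_smul_of_even (fun y => by simp [abs_neg])
    (hi.congr (hcongr.symm.mono uIoc_subset_uIcc)), integral_congr hcongr, smul_eq_mul]

lemma oscTransform_neg (c : ℝ) : oscTransform (-c) = oscTransform c := by
  simp only [oscTransform_eq_two_mul, neg_mul, cos_neg]

lemma abs_oscTransform_le_four (c : ℝ) : |oscTransform c| ≤ 4 := by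
  rw [oscTransform_eq_two_mul, abs_mul, abs_two]
  linarith [abs_integral_cos_mul_rpow_le_two c]

lemma oscTransform_eq_fresnelCos {c : ℝ} (hc : 0 < c) :
    oscTransform c = 2 * c ^ (-(1/2) : ℝ) * fresnelCos c := by
  have hsubst := integral_comp_mul_left (a := 0) (b := 1)
    (fun t => cos t * t ^ (-(1/2) : ℝ)) hc.ne'
  rw [mul_zero, mul_one, smul_eq_mul] at hsubst
  have hscale : ∫ y in (0 : ℝ)..1, cos (c * y) * (c * y) ^ (-(1/2) : ℝ)
      = c ^ (-(1/2) : ℝ) * ∫ y in (0 : ℝ)..1, cos (c * y) * y ^ (-(1/2) : ℝ) := by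
    rw [← intervalIntegral.integral_const_mul]
    refine integral_congr fun y hy => ?_
    simp only [mul_rpow hc.le (uIcc_of_le (zero_le_one (α := ℝ)) ▸ hy).1]
    ring
  have hsq : c ^ (-(1/2) : ℝ) * c ^ (-(1/2) : ℝ) = c⁻¹ := by
    rw [← rpow_add hc]; norm_num [rpow_neg_one]
  have hpos : 0 < c ^ (-(1/2) : ℝ) := rpow_pos_of_pos hc _
  rw [oscTransform_eq_two_mul, mul_assoc, ← mul_left_cancel_iff_of_pos hpos]
  rw [hscale, ← hsq] at hsubst
  rw [fresnelCos]
  linear_combination 2 * hsubst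

lemma le_abs_oscTransform {c : ℝ} (hc : 1 ≤ c) : 1 / 10 * c ^ (-(1/2) : ℝ) ≤ |oscTransform c| := by
  rw [oscTransform_eq_fresnelCos (by linarith)]
  have := rpow_nonneg (zero_le_one.trans hc) (-(1/2) : ℝ)
  nlinarith [one_twentieth_le_fresnelCos hc, le_abs_self (2 * c ^ (-(1/2) : ℝ) * fresnelCos c)]

lemma abs_oscTransform_le_of_one_le {c : ℝ} (hc : 1 ≤ c) :
    |oscTransform c| ≤ 8 * c ^ (-(1/2) : ℝ) := by
  rw [oscTransform_eq_fresnelCos (by linarith), abs_mul, abs_mul, abs_two,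
    abs_of_nonneg (rpow_nonneg (zero_le_one.trans hc) _)]
  have := rpow_nonneg (zero_le_one.trans hc) (-(1/2) : ℝ)
  nlinarith [abs_fresnelCos_le_four hc]

lemma abs_oscTransform_le (c : ℝ) : |oscTransform c| ≤ 12 * (1 + |c|) ^ (-(1/2) : ℝ) := by
  have hv : oscTransform |c| = oscTransform c := by
    rcases abs_choice c with h | h <;> rw [h]
    exact oscTransform_neg c
  rw [← hv, rpow_neg_half_eq_inv_sqrt (by positivity)]
  set x := |c|
  have hx : 0 ≤ x := abs_nonneg c
  have hs : 0 < √(1 + x) := sqrt_pos.mpr (by linarith)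
  rw [← div_eq_mul_inv, le_div_iff₀ hs]
  rcases le_total x 1 with hx1 | hx1
  · have : √(1 + x) ≤ 3 := sqrt_le_left (by norm_num) |>.mpr (by linarith)
    nlinarith [abs_oscTransform_le_four x, abs_nonneg (oscTransform x)]
  · have hbound := abs_oscTransform_le_of_one_le hx1
    rw [rpow_neg_half_eq_inv_sqrt hx] at hbound
    have hsx : 0 < √x := sqrt_pos.mpr (by linarith)
    have : √(1 + x) ≤ 3 / 2 * √x := by
      rw [sqrt_le_left (by positivity), mul_pow, sq_sqrt hx]; linarith
    have hmul : |oscTransform x| * √x ≤ 8 := by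
      rwa [← le_div_iff₀ hsx, div_eq_mul_inv]
    nlinarith [abs_nonneg (oscTransform x)]

lemma continuous_oscTransform : Continuous oscTransform := by
  rw [show oscTransform = _ from funext oscTransform_eq_two_mul]
  refine continuous_const.mul (continuous_of_dominated_interval
    (bound := fun y => y ^ (-(1/2) : ℝ)) (fun c => Measurable.aestronglyMeasurable (by fun_prop))
    (fun c => ae_of_all _ fun y hy => ?_) (intervalIntegrable_rpow' (by norm_num))
    (ae_of_all _ fun y _ => by fun_prop))
  rw [uIoc_of_le zero_le_one] at hy
  exact norm_cos_mul_rpow_neg_half_le c hy.1.le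

lemma integrable_abs_oscTransform_rpow {r : ℝ} (hr : 2 < r) :
    Integrable fun c => |oscTransform c| ^ r := by
  refine ((integrable_one_add_norm (E := ℝ) (r := r / 2) (by simp; linarith)).const_mul
    (12 ^ r)).mono'
    (continuous_oscTransform.abs.rpow_const fun _ => Or.inr (by linarith)).aestronglyMeasurable
    (ae_of_all _ fun c => ?_)
  rw [Real.norm_eq_abs, abs_of_nonneg (rpow_nonneg (abs_nonneg _) _), Real.norm_eq_abs]
  calc |oscTransform c| ^ r ≤ (12 * (1 + |c|) ^ (-(1/2) : ℝ)) ^ r :=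
        rpow_le_rpow (abs_nonneg _) (abs_oscTransform_le c) (by linarith)
    _ = 12 ^ r * (1 + |c|) ^ (-(r / 2)) := by
        rw [mul_rpow (by norm_num) (by positivity), ← rpow_mul (by positivity)]
        ring_nf

lemma integral_abs_oscTransform_rpow_ge {r : ℝ} (hr : 2 < r) :
    (1 / 10) ^ r * (r - 2)⁻¹ ≤ ∫ c, |oscTransform c| ^ r := by
  have hr2 : 0 < r - 2 := by linarith
  calc (1 / 10) ^ r * (r - 2)⁻¹ ≤ (1 / 10) ^ r * (2 / (r - 2)) := by
        gcongr; rw [div_eq_mul_inv]; linarith [inv_pos.mpr hr2]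
    _ = ∫ c in Ioi 1, (1 / 10) ^ r * c ^ (-(r / 2)) := by
        rw [MeasureTheory.integral_const_mul, integral_Ioi_rpow_of_lt (by linarith) one_pos,
          one_rpow, show -(r / 2) + 1 = -((r - 2) / 2) by ring, neg_div_neg_eq, one_div_div]
    _ ≤ ∫ c in Ioi 1, |oscTransform c| ^ r := by
        refine setIntegral_mono_on ((integrableOn_Ioi_rpow_of_lt (by linarith) one_pos).const_mul _)
          (integrable_abs_oscTransform_rpow hr).integrableOn measurableSet_Ioi fun c hc => ?_
        have hc0 : 0 ≤ c := zero_le_one.trans (le_of_lt hc)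
        calc (1 / 10) ^ r * c ^ (-(r / 2)) = (1 / 10 * c ^ (-(1/2) : ℝ)) ^ r := by
              rw [mul_rpow (by norm_num) (rpow_nonneg hc0 _), ← rpow_mul hc0]
              ring_nf
          _ ≤ |oscTransform c| ^ r :=
              rpow_le_rpow (by positivity) (le_abs_oscTransform (le_of_lt hc)) (by linarith)
    _ ≤ ∫ c, |oscTransform c| ^ r :=
        setIntegral_le_integral (integrable_abs_oscTransform_rpow hr)
          (ae_of_all _ fun c => rpow_nonneg (abs_nonneg _) _)

/-- There is `C > 0` such that for all `λ ≥ 1` and `r > 2`, the oscillating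
transform `u(x) = ∫_{-1}^1 cos(λxy)|y|^{-1/2} dy` of `f₀` satisfies
`|u|_r ≥ C λ^{-1/r} (r-2)^{-1/r}`. -/
theorem stmt13 :
    ∃ C : ℝ, 0 < C ∧
      ∀ lam : ℝ, 1 ≤ lam → ∀ r : ℝ, 2 < r →
        C * lam ^ (-(1 / r)) * (r - 2) ^ (-(1 / r)) ≤
          (∫ x : ℝ,
            |∫ y in (-1 : ℝ)..1, Real.cos (lam * x * y) * |y| ^ (-(1/2) : ℝ)| ^ r)
            ^ (1 / r) := by
  refine ⟨1 / 10, by norm_num, fun lam hlam r hr => ?_⟩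
  have hlam : 0 < lam := by linarith
  have hr2 : 0 < r - 2 := by linarith
  have hscale : ∫ x, |oscTransform (lam * x)| ^ r = lam⁻¹ * ∫ c, |oscTransform c| ^ r := by
    rw [Measure.integral_comp_mul_left (fun c => |oscTransform c| ^ r),
      abs_of_pos (inv_pos.mpr hlam), smul_eq_mul]
  have hlhs : 1 / 10 * lam ^ (-(1 / r)) * (r - 2) ^ (-(1 / r))
      = (lam⁻¹ * ((1 / 10) ^ r * (r - 2)⁻¹)) ^ (1 / r) := by
    rw [mul_rpow (by positivity) (by positivity), mul_rpow (by positivity) (by positivity),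
      inv_rpow hlam.le, inv_rpow hr2.le, ← rpow_neg hlam.le, ← rpow_neg hr2.le, one_div r,
      rpow_rpow_inv (by norm_num) (by linarith)]
    ring
  change _ ≤ (∫ x, |oscTransform (lam * x)| ^ r) ^ (1 / r)
  rw [hscale, hlhs]
  exact rpow_le_rpow (by positivity)
    (mul_le_mul_of_nonneg_left (integral_abs_oscTransform_rpow_ge hr) (by positivity))
    (by positivity)
end

section
/- Assume the lower bound |u|_{q} ≥ C₁·λ^{-1/q}·(q-2)^{-1/q} for q = p/(p-1), p ∈ (1,2), and the norm computation |f₀|_p = (4/(2-p))^{1/p}. Then λ^{1/q}·|u|_q/|f₀|_p ≥ C₂·(p-1)^{1/p - 1} ≥ C₂ for a constant C₂ > 0 independent of p ∈ (1,2) and λ ≥ 2. In particular inf_{λ≥2} inf_{p∈(1,2)} λ^{1/q}|u|_q/|f₀|_p > 0. -/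
open Real Set

/-- With `a = p - 1` and `b = 2 - p`, the logarithm of the right side minus that of the left side
is `(3p + a log 4 + 2 a log a + b log b) / p`, and `x log x ≥ x - 1` makes the numerator
at least `3p - 3 > 0`. -/
lemma exp_neg_three_div_four_mul_rpow_le {p : ℝ} (hp1 : 1 < p) (hp2 : p < 2) :
    exp (-3) / 4 * (p - 1) ^ (1 / p - 1) * (4 / (2 - p)) ^ (1 / p) ≤
      ((2 - p) / (p - 1)) ^ (-((p - 1) / p)) := by
  have hp : 0 < p := by linarith
  have ha : 0 < p - 1 := by linarith
  have hb : 0 < 2 - p := by linarith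
  rw [← log_le_log_iff (by positivity) (by positivity), log_mul (by positivity) (by positivity),
    log_mul (by positivity) (by positivity), log_div (by positivity) (by norm_num), log_exp,
    log_rpow ha, log_rpow (by positivity), log_rpow (by positivity), log_div (by norm_num) hb.ne',
    log_div hb.ne' ha.ne', ← sub_nonneg]
  have hlog_a := self_sub_one_le_mul_log ha.le
  have hlog_b := self_sub_one_le_mul_log hb.le
  have hlog_4 : 0 ≤ log 4 := log_nonneg (by norm_num)
  have hdiff : -((p - 1) / p) * (log (2 - p) - log (p - 1)) -
      (-3 - log 4 + (1 / p - 1) * log (p - 1) + 1 / p * (log 4 - log (2 - p))) =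
      (3 * p + (p - 1) * log 4 + 2 * ((p - 1) * log (p - 1)) + (2 - p) * log (2 - p)) / p := by
    field_simp
    ring
  rw [hdiff]
  exact div_nonneg (by nlinarith) hp.le

/-- The key computation in Theorem 4 of the paper.  If `Nu` is any quantity
(e.g. `|u|_q`) satisfying the lower bound `Nu ≥ C₁ λ^{-1/q} (q-2)^{-1/q}`
with `q = p/(p-1)`, and `Nf = (4/(2-p))^{1/p}` (the `L^p` norm of `f₀`), then
`λ^{1/q} Nu / Nf ≥ C₂ (p-1)^{1/p-1} ≥ C₂` for a constant `C₂ > 0` independent of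
`p ∈ (1,2)` and `λ ≥ 2`; in particular the double infimum is positive. -/
theorem stmt14 (C₁ : ℝ) (hC₁ : 0 < C₁) :
    ∃ C₂ : ℝ, 0 < C₂ ∧
      ∀ lam : ℝ, 2 ≤ lam → ∀ p : ℝ, p ∈ Set.Ioo (1 : ℝ) 2 →
        ∀ Nu Nf : ℝ,
          C₁ * lam ^ (-(1 / (p / (p - 1)))) * (p / (p - 1) - 2) ^ (-(1 / (p / (p - 1)))) ≤ Nu →
          Nf = (4 / (2 - p)) ^ (1 / p) →
          C₂ * (p - 1) ^ (1 / p - 1 : ℝ) ≤ lam ^ (1 / (p / (p - 1))) * Nu / Nf ∧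
          C₂ ≤ C₂ * (p - 1) ^ (1 / p - 1 : ℝ) := by
  refine ⟨C₁ * exp (-3) / 4, by positivity, fun lam hlam p ⟨hp1, hp2⟩ Nu Nf hNu hNf => ⟨?_, ?_⟩⟩
  · have hlam_pos : 0 < lam := by linarith
    have hinv : 1 / (p / (p - 1)) = (p - 1) / p := one_div_div _ _
    have hq : p / (p - 1) - 2 = (2 - p) / (p - 1) := by
      field_simp [show p - 1 ≠ 0 by linarith]
      ring
    rw [hinv, hq, rpow_neg hlam_pos.le] at hNu
    have hNu' : C₁ * ((2 - p) / (p - 1)) ^ (-((p - 1) / p)) ≤ lam ^ ((p - 1) / p) * Nu := by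
      have hpow := rpow_pos_of_pos hlam_pos ((p - 1) / p)
      rwa [mul_right_comm, mul_inv_le_iff₀ hpow, mul_comm Nu] at hNu
    rw [hinv, hNf, le_div_iff₀ (rpow_pos_of_pos (div_pos four_pos (by linarith)) _)]
    calc C₁ * exp (-3) / 4 * (p - 1) ^ (1 / p - 1) * (4 / (2 - p)) ^ (1 / p)
        = C₁ * (exp (-3) / 4 * (p - 1) ^ (1 / p - 1) * (4 / (2 - p)) ^ (1 / p)) := by ring
      _ ≤ C₁ * ((2 - p) / (p - 1)) ^ (-((p - 1) / p)) :=
          mul_le_mul_of_nonneg_left (exp_neg_three_div_four_mul_rpow_le hp1 hp2) hC₁.le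
      _ ≤ lam ^ ((p - 1) / p) * Nu := hNu'
  · refine le_mul_of_one_le_right (by positivity) ?_
    refine one_le_rpow_of_pos_of_le_one_of_nonpos (by linarith) (by linarith) ?_
    rw [sub_nonpos, div_le_one (by linarith)]
    exact hp1.le
end
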